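/- arXiv:1703.07266 — 9 statements merged into one kernel-verified Lean document; each statement's English description precedes it below -/
import Mathlib

section
/- Let K be a field, V a finite-dimensional K-vector space of dimension n, and M a subspace of the space of alternating bilinear forms on V. If U is a subspace of V of dimension r with 0 < r < n and dim M ≥ r·n + ε for some ε ≥ 0, then the subspace M_U of forms in M whose radical contains U satisfies dim M_U ≥ r(r+1)/2 + ε. -/
/-!
Choose a basis `u₁, …, u_r` of `U` and let `M_k` be the forms of `M` vanishing on
`u₁, …, u_k`. By skew-symmetry, `f ↦ f u_{k+1}` maps `M_k` into the annihilator of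
`span (u₁, …, u_{k+1})`, of dimension `n - k - 1`, and its kernel is `M_{k+1}`. Hence
`dim M_k ≤ dim M_{k+1} + n - k - 1`, and summing over `k < r` gives
`dim M ≤ dim M_U + r n - r (r + 1) / 2`.
-/

open Module LinearMap

section

variable {K V : Type*} [Field K] [AddCommGroup V] [Module K V]

def formsVanishingOn (U : Submodule K V) : Submodule K (V →ₗ[K] V →ₗ[K] K) :=
  ⨅ u ∈ U, ker (applyₗ (R := K) u)

theorem mem_formsVanishingOn {U : Submodule K V} {f : V →ₗ[K] V →ₗ[K] K} :
    f ∈ formsVanishingOn U ↔ U ≤ ker f := by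
  simp [formsVanishingOn, SetLike.le_def]

theorem formsVanishingOn_span_singleton_sup (u : V) (W : Submodule K V) :
    formsVanishingOn (K ∙ u ⊔ W) = formsVanishingOn W ⊓ ker (applyₗ (R := K) u) := by
  ext f
  simp [mem_formsVanishingOn, Submodule.span_singleton_le_iff_mem, and_comm]

@[simp]
theorem formsVanishingOn_bot : formsVanishingOn (⊥ : Submodule K V) = ⊤ := by
  ext f
  simp [mem_formsVanishingOn]

theorem LinearMap.IsAlt.span_singleton_sup_le_ker_apply {f : V →ₗ[K] V →ₗ[K] K}
    (hf : f.IsAlt) {W : Submodule K V} (hW : W ≤ ker f) (u : V) :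
    K ∙ u ⊔ W ≤ ker (f u) := by
  refine sup_le ((Submodule.span_singleton_le_iff_mem _ _).mpr (hf u)) fun w hw => ?_
  exact hf.eq_iff.mp (congrArg (· u) (hW hw))

variable [FiniteDimensional K V]

theorem finrank_add_finrank_le_finrank_inf_ker_applyₗ
    {N : Submodule K (V →ₗ[K] V →ₗ[K] K)} (hN : ∀ f ∈ N, f.IsAlt) {W : Submodule K V}
    (hNW : N ≤ formsVanishingOn W) (u : V) :
    finrank K N + finrank K ↥(K ∙ u ⊔ W) ≤
      finrank K ↥(N ⊓ ker (applyₗ (R := K) u)) + finrank K V := by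
  set φ := (applyₗ (R := K) u).domRestrict N
  have hker : finrank K (ker φ) = finrank K ↥(N ⊓ ker (applyₗ (R := K) u)) := by
    rw [ker_domRestrict, ← Submodule.finrank_map_subtype_eq, Submodule.map_comap_subtype]
  have hrange : range φ ≤ (K ∙ u ⊔ W).dualAnnihilator := by
    rintro _ ⟨⟨f, hf⟩, rfl⟩
    rw [Submodule.mem_dualAnnihilator]
    exact fun w hw =>
      (hN f hf).span_singleton_sup_le_ker_apply (mem_formsVanishingOn.mp (hNW hf)) u hw
  have h₁ : finrank K (range φ) ≤ finrank K (K ∙ u ⊔ W).dualAnnihilator :=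
    Submodule.finrank_mono hrange
  -- not found by instance search through the nested `LinearMap` instances
  let : AddCommGroup N := Submodule.addCommGroup (M := V →ₗ[K] V →ₗ[K] K) N
  have h₂ : finrank K (range φ) + finrank K (ker φ) = finrank K N :=
    LinearMap.finrank_range_add_finrank_ker φ
  have h₃ :
      finrank K ↥(K ∙ u ⊔ W) + finrank K (K ∙ u ⊔ W).dualAnnihilator = finrank K V :=
    Subspace.finrank_add_finrank_dualAnnihilator_eq (K ∙ u ⊔ W)
  omega

theorem finrank_add_choose_le_finrank_inf_formsVanishingOn_span
    {M : Submodule K (V →ₗ[K] V →ₗ[K] K)} (hM : ∀ f ∈ M, f.IsAlt) :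
    ∀ {k : ℕ} (v : Fin k → V), LinearIndependent K v →
      finrank K M + (k + 1).choose 2 ≤
        finrank K ↥(M ⊓ formsVanishingOn (Submodule.span K (Set.range v))) + k * finrank K V
  | 0, v, _ => by
    rw [Set.range_eq_empty v, Submodule.span_empty, formsVanishingOn_bot, inf_top_eq]
    simp
  | k + 1, v, hv => by
    have ih := finrank_add_choose_le_finrank_inf_formsVanishingOn_span hM (Fin.tail v)
      (hv.comp _ (Fin.succ_injective k))
    have hstep := finrank_add_finrank_le_finrank_inf_ker_applyₗ
      (N := M ⊓ formsVanishingOn (Submodule.span K (Set.range (Fin.tail v))))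
      (fun f hf => hM f hf.1) inf_le_right (v 0)
    have hspan : Submodule.span K (Set.range v) =
        K ∙ v 0 ⊔ Submodule.span K (Set.range (Fin.tail v)) := by
      rw [← Submodule.span_insert, ← Fin.range_cons, Fin.cons_self_tail]
    rw [← hspan, finrank_span_eq_card hv, inf_assoc, ← formsVanishingOn_span_singleton_sup,
      ← hspan, Fintype.card_fin] at hstep
    have hchoose : (k + 1 + 1).choose 2 = (k + 1).choose 2 + (k + 1) := by
      rw [Nat.choose_succ_succ', Nat.choose_one_right, add_comm]
    rw [hchoose, add_mul]
    omega

theorem finrank_add_choose_le_finrank_inf_formsVanishingOn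
    {M : Submodule K (V →ₗ[K] V →ₗ[K] K)} (hM : ∀ f ∈ M, f.IsAlt) (U : Submodule K V) :
    finrank K M + (finrank K U + 1).choose 2 ≤
      finrank K ↥(M ⊓ formsVanishingOn U) + finrank K U * finrank K V := by
  let b := Module.finBasis K U
  have hspan : Submodule.span K (Set.range fun i => (b i : V)) = U :=
    (Submodule.span_range_subtype_eq_top_iff U fun i => (b i).2).mp b.span_eq
  have := finrank_add_choose_le_finrank_inf_formsVanishingOn_span hM (fun i => (b i : V))
    (b.linearIndependent.map' U.subtype U.ker_subtype)
  rwa [hspan] at this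

end

theorem stmt0_general (K : Type*) [Field K] (V : Type*) [AddCommGroup V] [Module K V]
    [FiniteDimensional K V] (n r ε : ℕ) (hn : Module.finrank K V = n)
    (M : Submodule K (V →ₗ[K] V →ₗ[K] K))
    (halt : ∀ f ∈ M, ∀ x : V, f x x = 0)
    (U : Submodule K V) (hU : Module.finrank K ↥U = r)
    (hM : r * n + ε ≤ Module.finrank K ↥M) :
    r * (r + 1) / 2 + ε ≤
      Module.finrank K ↥(M ⊓ ⨅ u ∈ U, LinearMap.ker (LinearMap.applyₗ (R := K) u)) := by
  have key := finrank_add_choose_le_finrank_inf_formsVanishingOn halt U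
  rw [hU, hn, Nat.choose_two_right, Nat.add_sub_cancel, mul_comm (r + 1)] at key
  unfold formsVanishingOn at key
  omega

/-- If `M` is a subspace of alternating bilinear forms on an `n`-dimensional
space `V`, `U ≤ V` has dimension `r` with `0 < r < n`, and `dim M ≥ r·n + ε`, then the
subspace of forms in `M` whose radical contains `U` has dimension at least `r(r+1)/2 + ε`. -/
theorem stmt0 (K : Type*) [Field K] (V : Type*) [AddCommGroup V] [Module K V]
    [FiniteDimensional K V] (n r ε : ℕ) (hn : Module.finrank K V = n)
    (M : Submodule K (V →ₗ[K] V →ₗ[K] K))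
    (halt : ∀ f ∈ M, ∀ x : V, f x x = 0)
    (U : Submodule K V) (hU : Module.finrank K ↥U = r)
    (hr : 0 < r) (hrn : r < n)
    (hM : r * n + ε ≤ Module.finrank K ↥M) :
    r * (r + 1) / 2 + ε ≤
      Module.finrank K ↥(M ⊓ ⨅ u ∈ U, LinearMap.ker (LinearMap.applyₗ (R := K) u)) :=
  stmt0_general K V n r ε hn M halt U hU hM
end

section
/- Let K be a field, V a finite-dimensional K-vector space of dimension n, and M a subspace of the space of symmetric bilinear forms on V. If U is a subspace of V of dimension r with 0 < r < n and dim M ≥ r·n + ε for some ε ≥ 0, then the subspace M_U of forms in M whose radical contains U satisfies dim M_U ≥ r(r−1)/2 + ε. -/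
/-!
Evaluating the forms of `M` at a basis `v₁, …, v_r` of `U` gives a linear map
`Ψ : M → (V*)^r` whose kernel is `M_U`. Symmetry of the forms puts the image of `Ψ` inside the
kernel of the surjection `(φᵢ)ᵢ ↦ (φᵢ (v_j) - φ_j (vᵢ))_{i<j}` onto `K^(r(r-1)/2)`, so the image
has dimension at most `rn - r(r-1)/2`, and rank–nullity gives
`dim M_U ≥ dim M - rn + r(r-1)/2`.
-/

open Module LinearMap Submodule Function

theorem finrank_add_le_finrank_inf_ker_add {K B E C : Type*} [Field K] [AddCommGroup B]
    [Module K B] [FiniteDimensional K B] [AddCommGroup E] [Module K E] [FiniteDimensional K E]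
    [AddCommGroup C] [Module K C] (M : Submodule K B) {Ψ : B →ₗ[K] E}
    {T : E →ₗ[K] C} (hT : Surjective T) (hΨT : ∀ x ∈ M, T (Ψ x) = 0) :
    finrank K M + finrank K C ≤ finrank K ↥(M ⊓ ker Ψ) + finrank K E := by
  have hrestrict := finrank_range_add_finrank_ker (Ψ.domRestrict M)
  have hT_rank := finrank_range_add_finrank_ker T
  have hker : ker (Ψ.domRestrict M) = (M ⊓ ker Ψ).comap M.subtype := by
    rw [ker_domRestrict, comap_inf, comap_subtype_self, top_inf_eq]
  have hmap : finrank K (M.map Ψ) ≤ finrank K (ker T) :=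
    finrank_mono <| map_le_iff_le_comap.mpr hΨT
  rw [hker, (comapSubtypeEquivOfLe inf_le_left).finrank_eq, range_domRestrict] at hrestrict
  rw [range_eq_top.mpr hT, finrank_top] at hT_rank
  omega

section SkewEval

variable {K V : Type*} [Field K] [AddCommGroup V] [Module K V] {ι : Type*}

theorem LinearIndependent.exists_dual_apply_eq_single [Fintype ι] [DecidableEq ι] {v : ι → V}
    (hv : LinearIndependent K v) : ∃ g : V →ₗ[K] ι → K, ∀ j, g (v j) = Pi.single j 1 := by
  obtain ⟨g, hg⟩ := (Fintype.linearCombination K v).exists_leftInverse_of_injective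
    (ker_eq_bot.mpr hv.fintypeLinearCombination_injective)
  refine ⟨g, fun j => ?_⟩
  simpa using LinearMap.congr_fun hg (Pi.single j 1)

variable [LinearOrder ι]

def skewEval (v : ι → V) : (ι → V →ₗ[K] K) →ₗ[K] ({p : ι × ι // p.1 < p.2} → K) :=
  LinearMap.pi fun p => (applyₗ (v p.1.2)).comp (proj p.1.1) - (applyₗ (v p.1.1)).comp (proj p.1.2)

@[simp]
theorem skewEval_apply (v : ι → V) (φ : ι → V →ₗ[K] K) (p : {p : ι × ι // p.1 < p.2}) :
    skewEval v φ p = φ p.1.1 (v p.1.2) - φ p.1.2 (v p.1.1) :=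
  rfl

theorem skewEval_surjective [Fintype ι] {v : ι → V} (hv : LinearIndependent K v) :
    Surjective (skewEval (K := K) v) := by
  classical
  intro h
  obtain ⟨g, hg⟩ := hv.exists_dual_apply_eq_single
  let c : ι → ι → K := fun i j => if hij : i < j then h ⟨(i, j), hij⟩ else 0
  refine ⟨fun i => (Fintype.linearCombination K (c i)).comp g, funext fun p => ?_⟩
  have hp := p.2
  simp [hg, c, hp, hp.not_gt]

end SkewEval

theorem ker_pi_applyₗ_eq_iInf {R M N ι : Type*} [CommRing R] [AddCommGroup M] [Module R M]
    [AddCommGroup N] [Module R N] (v : ι → M) :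
    ker (LinearMap.pi fun i => applyₗ (R := R) (M := M) (M₂ := N) (v i)) =
      ⨅ u ∈ span R (Set.range v), ker (applyₗ (R := R) (M₂ := N) u) := by
  ext f
  simp only [mem_ker, mem_iInf, funext_iff, pi_apply, applyₗ_apply_apply, Pi.zero_apply]
  constructor
  · intro hf u hu
    exact span_le (p := ker f) |>.mpr (Set.range_subset_iff.mpr hf) hu
  · exact fun hf i => hf (v i) (subset_span (Set.mem_range_self i))

theorem stmt1_general (K : Type*) [Field K] (V : Type*) [AddCommGroup V] [Module K V]
    [FiniteDimensional K V] (n r ε : ℕ) (hn : Module.finrank K V = n)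
    (M : Submodule K (V →ₗ[K] V →ₗ[K] K))
    (hsymm : ∀ f ∈ M, ∀ x y : V, f x y = f y x)
    (U : Submodule K V) (hU : Module.finrank K ↥U = r)
    (hM : r * n + ε ≤ Module.finrank K ↥M) :
    r * (r - 1) / 2 + ε ≤
      Module.finrank K ↥(M ⊓ ⨅ u ∈ U, LinearMap.ker (LinearMap.applyₗ (R := K) u)) := by
  let b := finBasisOfFinrankEq K U hU
  let v : Fin r → V := U.subtype ∘ b
  have hv : LinearIndependent K v := b.linearIndependent.map' U.subtype U.ker_subtype
  have hspan : span K (Set.range v) = U := by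
    rw [Set.range_comp, span_image, b.span_eq, map_subtype_top]
  let Ψ : (V →ₗ[K] V →ₗ[K] K) →ₗ[K] Fin r → V →ₗ[K] K := LinearMap.pi fun i => applyₗ (v i)
  have key := finrank_add_le_finrank_inf_ker_add (B := V →ₗ[K] V →ₗ[K] K) M (Ψ := Ψ)
    (skewEval_surjective hv)
    fun f hf => by ext p; simp [Ψ, hsymm f hf]
  rw [ker_pi_applyₗ_eq_iInf, hspan] at key
  have hpairs : finrank K ({p : Fin r × Fin r // p.1 < p.2} → K) = r * (r - 1) / 2 := by
    rw [finrank_fintype_fun_eq_card, Fintype.card_subtype, Fintype.card_product_filter_lt,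
      Fintype.card_fin, Nat.choose_two_right]
  have hfamilies : finrank K (Fin r → V →ₗ[K] K) = r * n := by
    rw [finrank_pi_fintype, finrank_linearMap_self, hn]
    simp
  omega

/-- symmetric analogue of the radical-dimension bound:
`dim M_U ≥ r(r-1)/2 + ε`. -/
theorem stmt1 (K : Type*) [Field K] (V : Type*) [AddCommGroup V] [Module K V]
    [FiniteDimensional K V] (n r ε : ℕ) (hn : Module.finrank K V = n)
    (M : Submodule K (V →ₗ[K] V →ₗ[K] K))
    (hsymm : ∀ f ∈ M, ∀ x y : V, f x y = f y x)
    (U : Submodule K V) (hU : Module.finrank K ↥U = r)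
    (hr : 0 < r) (hrn : r < n)
    (hM : r * n + ε ≤ Module.finrank K ↥M) :
    r * (r - 1) / 2 + ε ≤
      Module.finrank K ↥(M ⊓ ⨅ u ∈ U, LinearMap.ker (LinearMap.applyₗ (R := K) u)) :=
  stmt1_general K V n r ε hn M hsymm U hU hM
end

section
/- Let K be a field, V a K-vector space of dimension n ≥ 2, and M a 2n-dimensional subspace of symmetric bilinear forms on V in which every nonzero element has rank at least n−2. Then for every 2-dimensional subspace U of V there exists an element of M of rank exactly n−2 whose radical equals U. -/
/-!
Restricting the forms of `M` to `U × V` is a linear map from `M` into `Hom(U, V*)`, and both spaces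
have dimension `2n`. By symmetry every restriction `g` satisfies `g u₁ u₂ = g u₂ u₁` on `U`, which
not every element of `Hom(U, V*)` does, so the map is not surjective and hence not injective. A
nonzero form in its kernel has `U` inside its radical, and the rank bound forces equality.
-/

open Module

section RestrictedForms

variable {K V : Type*} [Field K] [AddCommGroup V] [Module K V] [FiniteDimensional K V]

theorem Submodule.exists_linearMap_apply_ne_apply_swap (U : Submodule K V)
    (hU : 1 < finrank K U) : ∃ (g : U →ₗ[K] V →ₗ[K] K) (x y : U), g x y ≠ g y x := by
  let b := Module.finBasis K U
  let i : Fin (finrank K U) := ⟨0, by omega⟩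
  let j : Fin (finrank K U) := ⟨1, hU⟩
  obtain ⟨χ, hχ⟩ := Projective.exists_dual_ne_zero K
    (show (b j : V) ≠ 0 by simpa using b.ne_zero j)
  refine ⟨(b.coord i).smulRight χ, b i, b j, ?_⟩
  simp [i, j, hχ]

theorem Submodule.exists_mem_ne_zero_le_ker_of_symm (M : Submodule K (V →ₗ[K] V →ₗ[K] K))
    (hsymm : ∀ f ∈ M, ∀ x y : V, f x y = f y x) (U : Submodule K V) (hU : 1 < finrank K U)
    (hdim : finrank K U * finrank K V ≤ finrank K M) :
    ∃ f ∈ M, f ≠ 0 ∧ U ≤ LinearMap.ker f := by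
  let restrict : M →ₗ[K] U →ₗ[K] V →ₗ[K] K := (LinearMap.domRestrict' U).comp M.subtype
  have hrange : LinearMap.range restrict ≠ ⊤ := by
    obtain ⟨g, x, y, hxy⟩ := U.exists_linearMap_apply_ne_apply_swap hU
    intro htop
    obtain ⟨f, rfl⟩ := LinearMap.range_eq_top.1 htop g
    exact hxy (hsymm f f.2 x y)
  have hlt : finrank K (LinearMap.range restrict) < finrank K M := by
    have := Submodule.finrank_lt (V := U →ₗ[K] V →ₗ[K] K) hrange
    rw [finrank_linearMap, finrank_linearMap, finrank_self, mul_one] at this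
    omega
  have hker : LinearMap.ker restrict ≠ ⊥ := by
    intro hbot
    -- instance search finds no `AddCommGroup ↥M`: `M` was elaborated over `LinearMap.addCommMonoid`
    let _ : AddCommGroup M := Submodule.addCommGroup (M := V →ₗ[K] V →ₗ[K] K) M
    let _ : AddCommGroup (U →ₗ[K] V →ₗ[K] K) := LinearMap.addCommGroup
    have := LinearMap.finrank_range_add_finrank_ker (V := M) restrict
    rw [hbot, finrank_bot] at this
    omega
  obtain ⟨f, hf, hf0⟩ := (Submodule.ne_bot_iff _).1 hker
  refine ⟨f, f.2, by simpa using hf0, fun v hv => ?_⟩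
  simpa [restrict] using LinearMap.congr_fun hf ⟨v, hv⟩

end RestrictedForms

theorem stmt2_general (K : Type*) [Field K] (V : Type*) [AddCommGroup V] [Module K V]
    [FiniteDimensional K V] (n : ℕ) (hn : Module.finrank K V = n)
    (M : Submodule K (V →ₗ[K] V →ₗ[K] K))
    (hsymm : ∀ f ∈ M, ∀ x y : V, f x y = f y x)
    (hdim : Module.finrank K ↥M = 2 * n)
    (hrank : ∀ f ∈ M, f ≠ 0 → n - 2 ≤ n - Module.finrank K (LinearMap.ker f))
    (U : Submodule K V) (hU : Module.finrank K ↥U = 2) :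
    ∃ f ∈ M, f ≠ 0 ∧ n - Module.finrank K (LinearMap.ker f) = n - 2 ∧
      LinearMap.ker f = U := by
  obtain ⟨f, hfM, hf0, hUf⟩ :=
    M.exists_mem_ne_zero_le_ker_of_symm hsymm U (by omega) (by rw [hU, hn, hdim])
  have hker_ge : 2 ≤ finrank K (LinearMap.ker f) := hU ▸ Submodule.finrank_mono hUf
  have hker_le : finrank K (LinearMap.ker f) ≤ n := hn ▸ Submodule.finrank_le _
  have hker : finrank K (LinearMap.ker f) = 2 := by
    have := hrank f hfM hf0
    omega
  exact ⟨f, hfM, hf0, by omega,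
    (Submodule.eq_of_le_of_finrank_le hUf (by rw [hker, hU])).symm⟩

/-- if `M` is a `2n`-dimensional space of symmetric bilinear forms on an
`n`-dimensional space (`n ≥ 2`) in which every nonzero element has rank at least `n-2`,
then every `2`-dimensional subspace `U` of `V` is the radical of some element of `M`
of rank exactly `n-2`. -/
theorem stmt2 (K : Type*) [Field K] (V : Type*) [AddCommGroup V] [Module K V]
    [FiniteDimensional K V] (n : ℕ) (hn : Module.finrank K V = n) (hn2 : 2 ≤ n)
    (M : Submodule K (V →ₗ[K] V →ₗ[K] K))
    (hsymm : ∀ f ∈ M, ∀ x y : V, f x y = f y x)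
    (hdim : Module.finrank K ↥M = 2 * n)
    (hrank : ∀ f ∈ M, f ≠ 0 → n - 2 ≤ n - Module.finrank K (LinearMap.ker f))
    (U : Submodule K V) (hU : Module.finrank K ↥U = 2) :
    ∃ f ∈ M, f ≠ 0 ∧ n - Module.finrank K (LinearMap.ker f) = n - 2 ∧
      LinearMap.ker f = U :=
  stmt2_general K V n hn M hsymm hdim hrank U hU
end

section
/- Let q be a prime power and V an n-dimensional vector space over F_q. If M is a nonzero subspace of bilinear forms on V such that every nonzero element of M has rank exactly r (1 ≤ r ≤ n), then dim M ≤ 2n − r. -/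
/-!
Double count the triples `(f, u, v)` with `f ∈ M` and `f u v ≠ 0`, where `q = |K|` and `d = dim M`.
A nonzero `f` of rank `r` is nonzero at `(q^n - q^(n-r)) (q^n - q^(n-1))` pairs `(u, v)`,
while for a fixed pair, evaluation at `(u, v)` is a linear functional on `M`, nonzero at either
none or `q^d - q^(d-1)` forms. Hence `q^(d-1) (q - 1)` divides
`(q^d - 1) q^(n-r) (q^r - 1) q^(n-1) (q - 1)`, and as `q` is prime to `(q^d - 1) (q^r - 1)`,
this forces `d - 1 ≤ 2n - r - 1`.
-/

open Finset Module
open scoped Classical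

section Counting

variable {K : Type*} [Field K] [Fintype K]
variable {W U : Type*} [AddCommGroup W] [Module K W] [Fintype W] [AddCommGroup U] [Module K U]

local notation "q" => Fintype.card K

theorem card_filter_apply_ne_zero (φ : W →ₗ[K] U) :
    #{w | φ w ≠ 0} = q ^ finrank K W - q ^ finrank K (LinearMap.ker φ) := by
  have hker : #{w | φ w = 0} = q ^ finrank K (LinearMap.ker φ) := by
    rw [← card_eq_pow_finrank, ← Fintype.card_subtype]
    exact Fintype.card_congr (Equiv.subtypeEquivRight fun w => LinearMap.mem_ker.symm)
  have hsplit := card_filter_add_card_filter_not (s := univ) fun w => φ w = 0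
  rw [card_univ, card_eq_pow_finrank (K := K), hker] at hsplit
  simp only [← ne_eq] at hsplit
  omega

theorem card_filter_dual_ne_zero (g : W →ₗ[K] K) (hg : g ≠ 0) :
    #{w | g w ≠ 0} = q ^ finrank K W - q ^ (finrank K W - 1) := by
  have := Module.Dual.finrank_ker_add_one_of_ne_zero hg
  rw [card_filter_apply_ne_zero, ← this, Nat.add_sub_cancel]

theorem sum_card_filter_dual_ne_zero {ι : Type*} [Fintype ι] (Φ : ι → W →ₗ[K] K) :
    ∑ i, #{w | Φ i w ≠ 0} = #{i | Φ i ≠ 0} * (q ^ finrank K W - q ^ (finrank K W - 1)) := by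
  rw [card_eq_sum_ones, sum_mul, one_mul, sum_filter]
  refine sum_congr rfl fun i _ => ?_
  split_ifs with hi
  · exact card_filter_dual_ne_zero (Φ i) hi
  · simp [not_not.mp hi]

variable {V V' : Type*} [AddCommGroup V] [Module K V] [Fintype V]
  [AddCommGroup V'] [Module K V'] [Fintype V']

theorem card_filter_bilin_ne_zero (f : V →ₗ[K] V' →ₗ[K] K) :
    #{p : V × V' | f p.1 p.2 ≠ 0} =
      (q ^ finrank K V - q ^ finrank K (LinearMap.ker f)) *
        (q ^ finrank K V' - q ^ (finrank K V' - 1)) := by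
  have hfiber : #{p : V × V' | f p.1 p.2 ≠ 0} = ∑ u, #{v | f u v ≠ 0} := by
    simp only [card_filter]
    exact Fintype.sum_prod_type _
  rw [hfiber, sum_card_filter_dual_ne_zero]
  congr 1
  convert card_filter_apply_ne_zero f using 4

theorem pow_sub_pow_pred_dvd_of_finrank_ker_eq (M : Submodule K (V →ₗ[K] V' →ₗ[K] K))
    (k : ℕ) (hker : ∀ f ∈ M, f ≠ 0 → finrank K (LinearMap.ker f) = k) :
    q ^ finrank K M - q ^ (finrank K M - 1) ∣
      (q ^ finrank K M - 1) *
        ((q ^ finrank K V - q ^ k) * (q ^ finrank K V' - q ^ (finrank K V' - 1))) := by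
  -- not found by instance search
  let _ : AddCommGroup M :=
    @Submodule.addCommGroup K (V →ₗ[K] V' →ₗ[K] K) _ inferInstance _ M
  have : Finite M := Module.finite_of_finite K
  have := Fintype.ofFinite M
  set X := (q ^ finrank K V - q ^ k) * (q ^ finrank K V' - q ^ (finrank K V' - 1))
  have hform : ∀ f : M, f ≠ 0 → #{p : V × V' | (f : V →ₗ[K] V' →ₗ[K] K) p.1 p.2 ≠ 0} = X :=
    fun f hf => by
      rw [card_filter_bilin_ne_zero, hker f f.2 (by simpa using hf)]
  have hforms : ∑ f : M, #{p : V × V' | (f : V →ₗ[K] V' →ₗ[K] K) p.1 p.2 ≠ 0} =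
      (q ^ finrank K M - 1) * X := by
    rw [← sum_erase univ (a := 0) (by simp),
      sum_congr rfl fun f hf => hform f (ne_of_mem_erase hf), sum_const,
      card_erase_of_mem (mem_univ 0), card_univ, card_eq_pow_finrank (K := K) (V := M), smul_eq_mul]
  let eval : V × V' → M →ₗ[K] K := fun p =>
    LinearMap.applyₗ p.2 ∘ₗ LinearMap.applyₗ p.1 ∘ₗ M.subtype
  have hpairs : ∑ f : M, #{p : V × V' | (f : V →ₗ[K] V' →ₗ[K] K) p.1 p.2 ≠ 0} =
      ∑ p, #{f | eval p f ≠ 0} := by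
    simp only [card_filter]
    exact sum_comm
  rw [← hforms, hpairs, sum_card_filter_dual_ne_zero eval]
  exact dvd_mul_left _ _

end Counting

theorem le_two_mul_sub_of_pow_sub_pow_pred_dvd {q n r d : ℕ} (hq : 1 < q) (hr : 1 ≤ r)
    (hrn : r ≤ n)
    (h : q ^ d - q ^ (d - 1) ∣ (q ^ d - 1) * ((q ^ n - q ^ (n - r)) * (q ^ n - q ^ (n - 1)))) :
    d ≤ 2 * n - r := by
  rcases Nat.eq_zero_or_pos d with rfl | hd
  · exact Nat.zero_le _
  have factor : ∀ m k, k ≤ m → q ^ m - q ^ (m - k) = q ^ (m - k) * (q ^ k - 1) :=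
    fun m k hk => by rw [Nat.mul_sub, ← pow_add, Nat.sub_add_cancel hk, mul_one]
  have coprime : ∀ m, 0 < m → Nat.Coprime (q ^ (d - 1)) (q ^ m - 1) := fun m hm =>
    Nat.Coprime.pow_left _ <| Nat.Coprime.coprime_dvd_left (dvd_pow_self q hm.ne') <|
      (Nat.coprime_self_sub_right (Nat.one_le_pow _ _ (by omega))).mpr (Nat.coprime_one_right _)
  rw [factor d 1 hd, factor n r hrn, factor n 1 (by omega), pow_one] at h
  have h' : q ^ (d - 1) ∣ ((q ^ d - 1) * (q ^ r - 1)) * q ^ (n - r + (n - 1)) :=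
    Nat.dvd_of_mul_dvd_mul_right (k := q - 1) (by omega) (by convert h using 1; ring)
  have := ((coprime d hd).mul_right (coprime r hr)).dvd_of_dvd_mul_left h'
  rw [Nat.pow_dvd_pow_iff_le_right hq] at this
  omega

theorem stmt6_general (n r : ℕ) (K : Type*) [Field K] [Fintype K]
    (M : Submodule K ((Fin n → K) →ₗ[K] (Fin n → K) →ₗ[K] K))
    (hrank : ∀ f ∈ M, f ≠ 0 → n - Module.finrank K (LinearMap.ker f) = r) :
    Module.finrank K ↥M ≤ 2 * n - r := by
  obtain rfl | hM := eq_or_ne M ⊥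
  · simp
  obtain ⟨f, hfM, hf⟩ := M.ne_bot_iff.mp hM
  have hker_le : ∀ g : (Fin n → K) →ₗ[K] (Fin n → K) →ₗ[K] K,
      finrank K (LinearMap.ker g) ≤ n := fun g => by
    simpa using Submodule.finrank_le (LinearMap.ker g)
  have hker : ∀ g ∈ M, g ≠ 0 → finrank K (LinearMap.ker g) = n - r := fun g hgM hg => by
    have := hrank g hgM hg
    have := hker_le g
    omega
  have hr : 1 ≤ r ∧ r ≤ n := by
    have : finrank K (LinearMap.ker f) < n := by
      simpa using Submodule.finrank_lt (LinearMap.ker_eq_top.not.mpr hf)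
    have := hrank f hfM hf
    omega
  have hdvd := pow_sub_pow_pred_dvd_of_finrank_ker_eq M (n - r) hker
  rw [finrank_fin_fun] at hdvd
  exact le_two_mul_sub_of_pow_sub_pow_pred_dvd Fintype.one_lt_card hr.1 hr.2 hdvd

/-- a nonzero constant-rank-`r` subspace of bilinear forms on `F_q^n`
(`1 ≤ r ≤ n`) has dimension at most `2n − r`. -/
theorem stmt6 (q n r : ℕ) (K : Type*) [Field K] [Fintype K]
    (hq : Fintype.card K = q) (hr1 : 1 ≤ r) (hrn : r ≤ n)
    (M : Submodule K ((Fin n → K) →ₗ[K] (Fin n → K) →ₗ[K] K)) (hM : M ≠ ⊥)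
    (hrank : ∀ f ∈ M, f ≠ 0 → n - Module.finrank K (LinearMap.ker f) = r) :
    Module.finrank K ↥M ≤ 2 * n - r :=
  stmt6_general n r K M hrank
end

section
/- Let a ≥ 2 and r, s be positive integers with r ≥ 1. If a^r − 1 divides (a^s − 1)^2, then r divides s. -/
/-! Since `gcd (a^r - 1) (a^s - 1) = a^(gcd r s) - 1`, the hypothesis gives
`a^r - 1 ∣ (a^d - 1)^2` for `d = gcd r s`. If `d` were a proper divisor of `r`, then `r ≥ 2d`
and `a^r - 1 ≥ a^(2d) - 1 > (a^d - 1)^2 > 0`, which is impossible; hence `r = d ∣ s`. -/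

namespace Nat

theorem sub_one_sq_lt_sq_sub_one {x : ℕ} (hx : 2 ≤ x) : (x - 1) ^ 2 < x ^ 2 - 1 := by
  obtain ⟨y, rfl⟩ : ∃ y, x = y + 2 := ⟨x - 2, by omega⟩
  simp only [show y + 2 - 1 = y + 1 by omega]
  have : (y + 1) ^ 2 + 1 < (y + 2) ^ 2 := by nlinarith
  omega

theorem eq_of_dvd_of_pow_sub_one_dvd_sq {a d r : ℕ} (ha : 2 ≤ a) (hdr : d ∣ r)
    (h : a ^ r - 1 ∣ (a ^ d - 1) ^ 2) : r = d := by
  obtain ⟨k, rfl⟩ := hdr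
  rcases eq_zero_or_pos d with rfl | hd
  · simp
  have had : 2 ≤ a ^ d := ha.trans (le_self_pow hd.ne' a)
  have hpos : 0 < (a ^ d - 1) ^ 2 := pow_pos (by omega) 2
  rcases k with _ | _ | k
  · rw [mul_zero, pow_zero, Nat.sub_self, zero_dvd_iff] at h
    omega
  · simp
  · have hle : a ^ (d * 2) ≤ a ^ (d * (k + 1 + 1)) :=
      Nat.pow_le_pow_right (by omega) (Nat.mul_le_mul_left d (by omega))
    have hdvd_le := le_of_dvd hpos h
    have hsq_lt := sub_one_sq_lt_sq_sub_one had
    rw [← pow_mul] at hsq_lt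
    omega

end Nat

theorem stmt7_general (a r s : ℕ) (ha : 2 ≤ a)
    (h : (a ^ r - 1) ∣ (a ^ s - 1) ^ 2) : r ∣ s := by
  have hgcd : a ^ r - 1 ∣ (a ^ Nat.gcd r s - 1) ^ 2 := by
    rw [← Nat.pow_sub_one_gcd_pow_sub_one]
    exact (Nat.dvd_gcd dvd_rfl h).trans gcd_pow_right_dvd_pow_gcd
  have hr : r = Nat.gcd r s := Nat.eq_of_dvd_of_pow_sub_one_dvd_sq ha (Nat.gcd_dvd_left r s) hgcd
  exact hr ▸ Nat.gcd_dvd_right r s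

/-- if `a ≥ 2`, `r, s ≥ 1` and `a^r − 1` divides `(a^s − 1)^2`,
then `r` divides `s`. -/
theorem stmt7 (a r s : ℕ) (ha : 2 ≤ a) (hr : 1 ≤ r) (hs : 1 ≤ s)
    (h : (a ^ r - 1) ∣ (a ^ s - 1) ^ 2) : r ∣ s :=
  stmt7_general a r s ha h
end

section
/- Let 0 < r < n be integers with n − r dividing n, and let q be a prime power. Then the space of bilinear forms on an n-dimensional F_q-vector space contains a subspace of dimension 2n in which every nonzero element has rank either r or n. -/
/-!
Let `L = 𝔽_{q^n}` and let `σ = Frob^m`, `m = n - r`, whose fixed field `F = 𝔽_{q^m}` has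
dimension `m` over `𝔽_q`. The forms `(x, y) ↦ Tr_{L/𝔽_q}((a x + b σ x) y)`, `(a, b) ∈ L²`,
make up a `2n`-dimensional space, because `id` and `σ` are `L`-linearly independent. Since the
trace form is nondegenerate, the radical of such a form is the kernel of `x ↦ a x + b σ x`, and if
`x₀ ≠ 0` lies in that kernel then the kernel is the line `x₀ F`. So every nonzero form has radical
of dimension `0` or `m`, that is rank `n` or `r`.
-/

open Module LinearMap IntermediateField

section Pencil

variable {K L : Type*} [Field K] [Field L] [Algebra K L]

lemma mem_fixedField_zpowers_iff {σ : Gal(L/K)} {x : L} :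
    x ∈ fixedField (Subgroup.zpowers σ) ↔ σ x = x := by
  refine ⟨fun h ↦ (mem_fixedField_iff _ x).1 h σ (Subgroup.mem_zpowers σ), fun h ↦ ?_⟩
  have hσ : σ ∈ MulAction.stabilizer Gal(L/K) x := h
  exact (mem_fixedField_iff _ x).2 fun f hf ↦ Subgroup.zpowers_le.2 hσ hf

lemma finrank_fixedField_zpowers_mul_orderOf [FiniteDimensional K L] (σ : Gal(L/K)) :
    finrank K (fixedField (Subgroup.zpowers σ)) * orderOf σ = finrank K L := by
  rw [← Nat.card_zpowers, ← finrank_fixedField_eq_card, finrank_mul_finrank]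

variable (σ : Gal(L/K))

def pencil : L × L →ₗ[K] L →ₗ[K] L where
  toFun ab := ab.1 • LinearMap.id + ab.2 • σ.toLinearMap
  map_add' _ _ := by ext; simp [add_smul]; abel
  map_smul' _ _ := by ext; simp

@[simp]
lemma pencil_apply (ab : L × L) (x : L) : pencil σ ab x = ab.1 * x + ab.2 * σ x :=
  rfl

variable {σ}

lemma pencil_injective (hσ : σ ≠ 1) : Function.Injective (pencil σ) := by
  rw [← ker_eq_bot, ker_eq_bot']
  rintro ⟨a, b⟩ hab
  have hzero (x : L) : a * x + b * σ x = 0 := by simpa using LinearMap.congr_fun hab x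
  obtain ⟨x, hx⟩ : ∃ x, σ x ≠ x := by
    by_contra! h
    exact hσ (AlgEquiv.ext h)
  have hsum : a + b = 0 := by simpa using hzero 1
  have ha : a = 0 := by
    have : a * (x - σ x) = 0 := by linear_combination hzero x - σ x * hsum
    exact (mul_eq_zero.1 this).resolve_right (sub_ne_zero.2 hx.symm)
  simp [ha, eq_neg_of_add_eq_zero_right hsum]

lemma ker_pencil_eq_map_mulLeft {ab : L × L} (hab : ab ≠ 0) {x₀ : L}
    (hx₀ : x₀ ∈ ker (pencil σ ab)) (hx₀' : x₀ ≠ 0) :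
    ker (pencil σ ab) =
      (fixedField (Subgroup.zpowers σ)).toSubalgebra.toSubmodule.map (mulLeft K x₀) := by
  obtain ⟨a, b⟩ := ab
  have h₀ : a * x₀ + b * σ x₀ = 0 := by simpa using hx₀
  have hb : b ≠ 0 := by
    rintro rfl
    simp_all
  ext x
  simp only [mem_ker, pencil_apply, Submodule.mem_map, Subalgebra.mem_toSubmodule,
    mem_toSubalgebra, mem_fixedField_zpowers_iff, mulLeft_apply]
  constructor
  · intro hx
    have hσx₀ : σ x₀ ≠ 0 := by simpa using hx₀'
    refine ⟨x / x₀, ?_, mul_div_cancel₀ x hx₀'⟩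
    rw [map_div₀, div_eq_div_iff hσx₀ hx₀']
    apply mul_left_cancel₀ hb
    linear_combination x₀ * hx - x * h₀
  · rintro ⟨y, hy, rfl⟩
    rw [map_mul, hy]
    linear_combination y * h₀

lemma finrank_ker_pencil {ab : L × L} (hab : ab ≠ 0) :
    finrank K (ker (pencil σ ab)) = 0 ∨
      finrank K (ker (pencil σ ab)) = finrank K (fixedField (Subgroup.zpowers σ)) := by
  by_cases hbot : ker (pencil σ ab) = ⊥
  · left
    rw [hbot, finrank_bot]
  obtain ⟨x₀, hx₀, hx₀'⟩ := (Submodule.ne_bot_iff _).1 hbot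
  rw [ker_pencil_eq_map_mulLeft hab hx₀ hx₀']
  exact Or.inr (Submodule.equivMapOfInjective _ (mul_right_injective₀ hx₀') _).finrank_eq.symm

end Pencil

section TracePencil

variable {K L : Type*} [Field K] [Field L] [Algebra K L] [FiniteDimensional K L]
  [Algebra.IsSeparable K L]

lemma ker_traceForm : ker (Algebra.traceForm K L) = ⊥ :=
  BilinForm.nondegenerate_iff_ker_eq_bot.1 (traceForm_nondegenerate K L)

lemma ker_traceForm_comp (g : L →ₗ[K] L) : ker (Algebra.traceForm K L ∘ₗ g) = ker g := by
  rw [ker_comp, ker_traceForm, Submodule.comap_bot]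

lemma compRight_traceForm_injective :
    Function.Injective (compRight K (Algebra.traceForm K L) : (L →ₗ[K] L) →ₗ[K] _) := by
  have hT : Function.Injective (Algebra.traceForm K L) := ker_eq_bot.1 ker_traceForm
  exact fun g h hgh ↦ LinearMap.ext fun x ↦ hT (LinearMap.congr_fun hgh x)

lemma exists_submodule_bilinForm_finrank_ker {σ : Gal(L/K)} (hσ : σ ≠ 1) :
    ∃ M : Submodule K (LinearMap.BilinForm K L), finrank K M = 2 * finrank K L ∧
      ∀ B ∈ M, B ≠ 0 → finrank K (ker B) = 0 ∨
        finrank K (ker B) = finrank K (fixedField (Subgroup.zpowers σ)) := by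
  let Φ := compRight K (Algebra.traceForm K L) ∘ₗ pencil σ
  have hΦ : Function.Injective Φ := compRight_traceForm_injective.comp (pencil_injective hσ)
  refine ⟨range Φ, ?_, ?_⟩
  · rw [finrank_range_of_inj hΦ, finrank_prod, two_mul]
  · rintro _ ⟨ab, rfl⟩ hab
    have hab' : ab ≠ 0 := by
      rintro rfl
      exact hab (map_zero Φ)
    have hΦab : Φ ab = Algebra.traceForm K L ∘ₗ pencil σ ab := rfl
    rw [hΦab, ker_traceForm_comp]
    exact finrank_ker_pencil hab'

end TracePencil

lemma LinearMap.BilinForm.finrank_ker_congr {R V W : Type*} [CommRing R] [AddCommMonoid V]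
    [Module R V] [AddCommMonoid W] [Module R W] (e : V ≃ₗ[R] W) (B : LinearMap.BilinForm R V) :
    finrank R (ker (congr e B)) = finrank R (ker B) := by
  have hker : ker (congr e B) = (ker B).comap e.symm.toLinearMap := by
    ext x
    simp only [mem_ker, Submodule.mem_comap, LinearEquiv.coe_coe]
    constructor
    · intro h
      ext y
      simpa using LinearMap.congr_fun h (e y)
    · intro h
      ext y
      simp [congr_apply, h]
  rw [hker, Submodule.comap_equiv_eq_map_symm]
  exact LinearEquiv.finrank_map_eq _ _

section FiniteField

variable {K L : Type*} [Field K] [Fintype K] [Field L] [Finite L] [Algebra K L]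

lemma FiniteField.frobeniusAlgEquivOfAlgebraic_pow_ne_one {m : ℕ} (hm : m ≠ 0)
    (hmL : m < finrank K L) : FiniteField.frobeniusAlgEquivOfAlgebraic K L ^ m ≠ 1 :=
  pow_ne_one_of_lt_orderOf hm (by rwa [FiniteField.orderOf_frobeniusAlgEquivOfAlgebraic])

lemma FiniteField.finrank_fixedField_frobeniusAlgEquivOfAlgebraic_pow {m : ℕ} (hm : m ≠ 0)
    (hmL : m ∣ finrank K L) :
    finrank K (fixedField (Subgroup.zpowers (frobeniusAlgEquivOfAlgebraic K L ^ m))) = m := by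
  have key := finrank_fixedField_zpowers_mul_orderOf (frobeniusAlgEquivOfAlgebraic K L ^ m)
  rw [orderOf_pow_of_dvd hm (by rwa [orderOf_frobeniusAlgEquivOfAlgebraic]),
    orderOf_frobeniusAlgEquivOfAlgebraic] at key
  have hpos : 0 < finrank K L / m := Nat.div_pos (Nat.le_of_dvd finrank_pos hmL) (by omega)
  exact Nat.eq_of_mul_eq_mul_right hpos (key.trans (Nat.mul_div_cancel' hmL).symm)

end FiniteField

theorem stmt9_general (n r : ℕ) (K : Type*) [Field K] [Fintype K]
    (hr0 : 0 < r) (hrn : r < n) (hdvd : (n - r) ∣ n) :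
    ∃ M : Submodule K ((Fin n → K) →ₗ[K] (Fin n → K) →ₗ[K] K),
      Module.finrank K ↥M = 2 * n ∧
      ∀ f ∈ M, f ≠ 0 →
        n - Module.finrank K (LinearMap.ker f) = r ∨
        n - Module.finrank K (LinearMap.ker f) = n := by
  have : Fact (ringChar K).Prime := ⟨CharP.char_is_prime K _⟩
  have : NeZero n := ⟨by omega⟩
  let L := FiniteField.Extension K (ringChar K) n
  have hL : finrank K L = n := FiniteField.finrank_extension K (ringChar K) n
  obtain ⟨M, hM, hker⟩ := exists_submodule_bilinForm_finrank_ker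
    (FiniteField.frobeniusAlgEquivOfAlgebraic_pow_ne_one (K := K) (L := L) (m := n - r) (by omega)
      (by omega))
  rw [FiniteField.finrank_fixedField_frobeniusAlgEquivOfAlgebraic_pow (by omega) (by rwa [hL])]
    at hker
  let e : L ≃ₗ[K] (Fin n → K) := LinearEquiv.ofFinrankEq _ _ (by rw [hL, finrank_fin_fun])
  refine ⟨M.map (BilinForm.congr e).toLinearMap, by rw [LinearEquiv.finrank_map_eq, hM, hL], ?_⟩
  rintro _ ⟨B, hB, rfl⟩ hB0
  rw [LinearEquiv.coe_coe, BilinForm.finrank_ker_congr]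
  rcases hker B hB (by rintro rfl; exact hB0 (map_zero _)) with h | h <;> omega

/-- if `0 < r < n` and `n − r` divides `n`, then the bilinear forms on
`F_q^n` contain a `2n`-dimensional subspace in which every nonzero element has rank
`r` or `n`. -/
theorem stmt9 (q n r : ℕ) (K : Type*) [Field K] [Fintype K]
    (hq : Fintype.card K = q) (hr0 : 0 < r) (hrn : r < n) (hdvd : (n - r) ∣ n) :
    ∃ M : Submodule K ((Fin n → K) →ₗ[K] (Fin n → K) →ₗ[K] K),
      Module.finrank K ↥M = 2 * n ∧
      ∀ f ∈ M, f ≠ 0 →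
        n - Module.finrank K (LinearMap.ker f) = r ∨
        n - Module.finrank K (LinearMap.ker f) = n :=
  stmt9_general n r K hr0 hrn hdvd
end

section
/- Let q be a prime power, V an n-dimensional F_q-vector space with n odd, and M a subspace of alternating bilinear forms on V in which every nonzero element has rank n − 1. Then dim M ≤ n. Moreover, if dim M = n, then for each nonzero u ∈ V the subspace {f ∈ M : u ∈ rad f} is exactly one-dimensional. -/
/-!
Let `q = |K|`, `n = dim V` and `m = dim M`, and count the pairs `(u, f) ∈ V × M` with `f u = 0`.
Summing over `f`, the form `0` contributes `q ^ n` and each of the other `q ^ m - 1` forms, whose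
radical is a line, contributes `q`. Summing over `u`, the vector `0` contributes `q ^ m`, and for
`u ≠ 0` the map `f ↦ f u` sends `M` into the hyperplane `{φ | φ u = 0}` (because `f u u = 0`), so
its kernel has dimension at least `m - (n - 1)`. Comparing the two counts forces `m ≤ n`, and when
`m = n` every one of these lower bounds `q ^ 1` must be attained.
-/

open Module LinearMap Finset

section AddCommMonoid

/- Only `AddCommMonoid E` is assumed because instance search finds no `AddCommGroup` structure on
submodules of `V →ₗ[K] V →ₗ[K] K`. -/
variable {K E : Type*} [Field K] [AddCommMonoid E] [Module K E]

theorem Submodule.natCard_eq_pow_finrank [Module.Finite K E] (p : Submodule K E) :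
    Nat.card p = Nat.card K ^ finrank K p := by
  let := Module.addCommMonoidToAddCommGroup K (M := E)
  exact Module.natCard_eq_pow_finrank

theorem Submodule.finrank_map_add_finrank_inf_ker {W : Type*} [AddCommGroup W] [Module K W]
    [Module.Finite K E] (p : Submodule K E) (g : E →ₗ[K] W) :
    finrank K (p.map g) + finrank K ↥(p ⊓ ker g) = finrank K p := by
  let := Module.addCommMonoidToAddCommGroup K (M := E)
  have hrank := finrank_range_add_finrank_ker (g.domRestrict p)
  rwa [range_domRestrict, ker_domRestrict, ← Submodule.finrank_map_subtype_eq,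
    Submodule.map_comap_subtype] at hrank

end AddCommMonoid

theorem Nat.le_of_pow_add_mul_pow_le {q n m : ℕ} (hq : 2 ≤ q) (hn : 2 ≤ n)
    (h : q ^ m + (q ^ n - 1) * q ^ (m + 1 - n) ≤ q ^ n + (q ^ m - 1) * q) : m ≤ n := by
  by_contra! hnm
  obtain ⟨k, rfl⟩ := Nat.exists_eq_add_of_lt hnm
  rw [show n + k + 1 + 1 - n = k + 1 + 1 by omega, add_assoc, pow_add, pow_succ q (k + 1)] at h
  have hQ : q * q ≤ q ^ n := by simpa [sq] using Nat.pow_le_pow_right (by omega) hn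
  have hP : q ≤ q ^ (k + 1) := Nat.le_self_pow (by omega) q
  have hQ1 : 1 ≤ q ^ n := by nlinarith
  have hQP1 : 1 ≤ q ^ n * q ^ (k + 1) := by nlinarith
  zify [hQ1, hQP1] at h hQ hP hq
  -- `h` rearranges to `(q ^ n - q) * (q ^ (k + 1) - 1) ≤ 0`
  nlinarith [mul_pos (by nlinarith : (0 : ℤ) < q ^ n - q)
    (by linarith : (0 : ℤ) < q ^ (k + 1) - 1)]

namespace LinearMap

theorem sum_natCard_inf_ker_applyₗ_eq_sum_natCard_ker {R V W : Type*} [CommSemiring R]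
    [AddCommMonoid V] [AddCommMonoid W] [Module R V] [Module R W] [Fintype V]
    (M : Submodule R (V →ₗ[R] W)) [Fintype M] :
    ∑ u : V, Nat.card ↥(M ⊓ ker (applyₗ (R := R) u)) =
      ∑ f : M, Nat.card (ker (f : V →ₗ[R] W)) := by
  classical
  have hslice (u : V) :
      Nat.card ↥(M ⊓ ker (applyₗ (R := R) u)) = #{f : M | (f : V →ₗ[R] W) u = 0} := by
    rw [← Fintype.card_subtype, ← Nat.card_eq_fintype_card]
    exact Nat.card_congr
      { toFun f := ⟨⟨f, f.2.1⟩, f.2.2⟩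
        invFun f := ⟨f.1, f.1.2, f.2⟩ }
  have hker (f : M) : Nat.card (ker (f : V →ₗ[R] W)) = #{u | (f : V →ₗ[R] W) u = 0} := by
    rw [← Fintype.card_subtype, ← Nat.card_eq_fintype_card]
    rfl
  simp only [hslice, hker, card_filter]
  exact sum_comm

variable {K V : Type*} [Field K] [AddCommGroup V] [Module K V] [FiniteDimensional K V]

theorem sum_pow_finrank_inf_ker_applyₗ_of_finrank_ker_eq_one {W : Type*} [AddCommMonoid W]
    [Module K W] [Finite K] [Module.Finite K (V →ₗ[K] W)] [Fintype V] [DecidableEq V]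
    (M : Submodule K (V →ₗ[K] W))
    (hker : ∀ f ∈ M, f ≠ 0 → finrank K (ker f) = 1) :
    Nat.card K ^ finrank K M +
        ∑ u ∈ univ.erase 0, Nat.card K ^ finrank K ↥(M ⊓ ker (applyₗ (R := K) u)) =
      Nat.card K ^ finrank K V + (Nat.card K ^ finrank K M - 1) * Nat.card K := by
  classical
  have : Finite (V →ₗ[K] W) := Module.finite_of_finite K
  let := Fintype.ofFinite M
  have hcount := sum_natCard_inf_ker_applyₗ_eq_sum_natCard_ker M
  rw [← add_sum_erase _ _ (mem_univ 0), ← add_sum_erase _ _ (mem_univ 0)] at hcount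
  have hker_card : ∀ f ∈ univ.erase (0 : M), Nat.card (ker (f : V →ₗ[K] W)) = Nat.card K := by
    intro f hf
    rw [Submodule.natCard_eq_pow_finrank, hker f f.2 (by simpa using hf), pow_one]
  rw [sum_congr rfl hker_card, sum_const, card_erase_of_mem (mem_univ _), card_univ,
    Fintype.card_eq_nat_card, smul_eq_mul, map_zero, ker_zero, inf_top_eq, ZeroMemClass.coe_zero,
    ker_zero] at hcount
  simp only [Submodule.natCard_eq_pow_finrank, finrank_top] at hcount
  exact hcount

theorem finrank_add_one_le_finrank_inf_ker_applyₗ_add (M : Submodule K (V →ₗ[K] V →ₗ[K] K))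
    {u : V} (hu : u ≠ 0) (halt : ∀ f ∈ M, f u u = 0) :
    finrank K M + 1 ≤ finrank K ↥(M ⊓ ker (applyₗ (R := K) u)) + finrank K V := by
  have hrange : M.map (applyₗ u) ≤ (K ∙ u).dualAnnihilator := by
    rintro _ ⟨f, hf, rfl⟩
    simp [Submodule.mem_dualAnnihilator, Submodule.mem_span_singleton, halt f hf]
  have hdual : 1 + finrank K (K ∙ u).dualAnnihilator = finrank K V := by
    rw [← finrank_span_singleton (K := K) hu, Subspace.finrank_add_finrank_dualAnnihilator_eq]
  have hle := (Nat.add_le_add_left (Submodule.finrank_mono hrange) 1).trans_eq hdual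
  have hrank := Submodule.finrank_map_add_finrank_inf_ker M (applyₗ (R := K) u)
  omega

theorem finrank_le_of_finrank_ker_eq_one [Finite K] (M : Submodule K (V →ₗ[K] V →ₗ[K] K))
    (halt : ∀ f ∈ M, ∀ x, f x x = 0) (hker : ∀ f ∈ M, f ≠ 0 → finrank K (ker f) = 1) :
    finrank K M ≤ finrank K V := by
  classical
  obtain hV | hV := le_or_gt (finrank K V) 1
  · have hM : M = ⊥ := (Submodule.eq_bot_iff M).2 fun f hf => by
      by_contra hf0
      have := Submodule.finrank_lt (ker_eq_top.not.2 hf0)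
      have := hker f hf hf0
      omega
    rw [hM, finrank_bot]
    exact Nat.zero_le _
  have : Finite V := Module.finite_of_finite K
  let := Fintype.ofFinite V
  have hle : ∀ u ∈ univ.erase (0 : V), Nat.card K ^ (finrank K M + 1 - finrank K V) ≤
      Nat.card K ^ finrank K ↥(M ⊓ ker (applyₗ (R := K) u)) := fun u hu => by
    have := finrank_add_one_le_finrank_inf_ker_applyₗ_add M (ne_of_mem_erase hu)
      fun f hf => halt f hf u
    exact Nat.pow_le_pow_right Nat.card_pos (by omega)
  have hsum := card_nsmul_le_sum _ _ _ hle
  rw [card_erase_of_mem (mem_univ _), card_univ, Fintype.card_eq_nat_card,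
    Module.natCard_eq_pow_finrank (K := K), smul_eq_mul] at hsum
  exact Nat.le_of_pow_add_mul_pow_le Finite.one_lt_card hV
    (sum_pow_finrank_inf_ker_applyₗ_of_finrank_ker_eq_one M hker ▸ Nat.add_le_add_left hsum _)

theorem finrank_inf_ker_applyₗ_eq_one [Finite K] (M : Submodule K (V →ₗ[K] V →ₗ[K] K))
    (halt : ∀ f ∈ M, ∀ x, f x x = 0) (hker : ∀ f ∈ M, f ≠ 0 → finrank K (ker f) = 1)
    (hM : finrank K M = finrank K V) {u : V} (hu : u ≠ 0) :
    finrank K ↥(M ⊓ ker (applyₗ (R := K) u)) = 1 := by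
  classical
  have : Finite V := Module.finite_of_finite K
  let := Fintype.ofFinite V
  have hle : ∀ v ∈ univ.erase (0 : V),
      Nat.card K ^ 1 ≤ Nat.card K ^ finrank K ↥(M ⊓ ker (applyₗ (R := K) v)) := fun v hv => by
    have := finrank_add_one_le_finrank_inf_ker_applyₗ_add M (ne_of_mem_erase hv)
      fun f hf => halt f hf v
    exact Nat.pow_le_pow_right Nat.card_pos (by omega)
  have hcount := sum_pow_finrank_inf_ker_applyₗ_of_finrank_ker_eq_one M hker
  have hsum : ∑ v ∈ univ.erase (0 : V), Nat.card K ^ 1 =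
      ∑ v ∈ univ.erase (0 : V), Nat.card K ^ finrank K ↥(M ⊓ ker (applyₗ (R := K) v)) := by
    rw [sum_const, card_erase_of_mem (mem_univ _), card_univ, Fintype.card_eq_nat_card,
      Module.natCard_eq_pow_finrank (K := K), smul_eq_mul, pow_one]
    rw [hM] at hcount
    omega
  exact (Nat.pow_right_injective Finite.one_lt_card
    ((sum_eq_sum_iff_of_le hle).1 hsum u (mem_erase.2 ⟨hu, mem_univ u⟩))).symm

end LinearMap

theorem stmt10_general (n : ℕ) (K : Type*) [Field K] [Fintype K]
    (M : Submodule K ((Fin n → K) →ₗ[K] (Fin n → K) →ₗ[K] K))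
    (halt : ∀ f ∈ M, ∀ x : Fin n → K, f x x = 0)
    (hrank : ∀ f ∈ M, f ≠ 0 → n - Module.finrank K (LinearMap.ker f) = n - 1) :
    Module.finrank K ↥M ≤ n ∧
      (Module.finrank K ↥M = n → ∀ u : Fin n → K, u ≠ 0 →
        Module.finrank K ↥(M ⊓ LinearMap.ker (LinearMap.applyₗ (R := K) u)) = 1) := by
  have hker : ∀ f ∈ M, f ≠ 0 → finrank K (ker f) = 1 := fun f hf hf0 => by
    have := Submodule.finrank_lt (ker_eq_top.not.2 hf0)
    have := hrank f hf hf0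
    rw [finrank_fin_fun] at *
    omega
  have hdim := finrank_fin_fun K (n := n)
  exact ⟨(finrank_le_of_finrank_ker_eq_one M halt hker).trans_eq hdim, fun hM u hu =>
    finrank_inf_ker_applyₗ_eq_one M halt hker (hM.trans hdim.symm) hu⟩

/-- if `n` is odd and `M` is a subspace of alternating bilinear forms on
`F_q^n` all of whose nonzero elements have rank `n − 1`, then `dim M ≤ n`; and if
`dim M = n`, then for each nonzero `u` the subspace `{f ∈ M : u ∈ rad f}` is
one-dimensional. -/
theorem stmt10 (q n : ℕ) (K : Type*) [Field K] [Fintype K]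
    (hq : Fintype.card K = q) (hodd : Odd n)
    (M : Submodule K ((Fin n → K) →ₗ[K] (Fin n → K) →ₗ[K] K))
    (halt : ∀ f ∈ M, ∀ x : Fin n → K, f x x = 0)
    (hrank : ∀ f ∈ M, f ≠ 0 → n - Module.finrank K (LinearMap.ker f) = n - 1) :
    Module.finrank K ↥M ≤ n ∧
      (Module.finrank K ↥M = n → ∀ u : Fin n → K, u ≠ 0 →
        Module.finrank K ↥(M ⊓ LinearMap.ker (LinearMap.applyₗ (R := K) u)) = 1) :=
  stmt10_general n K M halt hrank
end

section
/- Let K be a perfect field of characteristic 2, W a finite-dimensional K-vector space, and M a subspace of symmetric bilinear forms on W in which every nonzero element is nondegenerate (rank dim W). If dim M = dim W, then M contains no nonzero alternating form. -/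
/-!
Evaluation at a nonzero `w` maps `M` injectively, hence (as `dim M = dim W`) onto `W*`, so no
nonzero vector is isotropic for every form of `M`. In characteristic 2, `w ↦ f w w` is additive for
symmetric `f` and `f (c • w) (c • w) = c² f w w`; so if the diagonals `(f bᵢ bᵢ)ᵢ` of the forms of
`M` satisfied a linear relation `∑ aᵢ xᵢ = 0`, the vector `∑ √aᵢ • bᵢ` would be isotropic for all
of `M`. Hence `f ↦ (f bᵢ bᵢ)ᵢ` maps `M` onto `Kⁿ`, and by counting dimensions injectively, while
it kills every alternating form.
-/

open Module

section CharTwo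

variable {R W : Type*} [CommRing R] [CharP R 2] [AddCommGroup W] [Module R W]
  {B : W →ₗ[R] W →ₗ[R] R}

theorem apply_add_self_of_charTwo (hB : ∀ x y, B x y = B y x) (x y : W) :
    B (x + y) (x + y) = B x x + B y y := by
  simp only [map_add, LinearMap.add_apply, hB y x]
  linear_combination CharTwo.add_self_eq_zero (B x y)

theorem apply_sum_smul_self_of_charTwo (hB : ∀ x y, B x y = B y x) {ι : Type*} (s : Finset ι)
    (c : ι → R) (v : ι → W) :
    B (∑ i ∈ s, c i • v i) (∑ i ∈ s, c i • v i) = ∑ i ∈ s, c i ^ 2 * B (v i) (v i) := by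
  let q : W →+ R :=
    { toFun := fun w => B w w
      map_zero' := by simp
      map_add' := apply_add_self_of_charTwo hB }
  refine (map_sum q (fun i => c i • v i) s).trans (Finset.sum_congr rfl fun i _ => ?_)
  simp [q, pow_two, mul_assoc]

end CharTwo

section Field

variable {K W : Type*} [Field K] [AddCommGroup W] [Module K W]

-- Only stated for bilinear forms: for this nested `LinearMap` type, instance search does not find
-- `AddCommGroup ↥M`, and unifying the instances of a general version times out.
theorem disjoint_ker_iff_map_eq_top_of_finrank_eq [FiniteDimensional K W] {V : Type*}
    [AddCommGroup V] [Module K V] [FiniteDimensional K V] {M : Submodule K (W →ₗ[K] W →ₗ[K] K)}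
    (g : (W →ₗ[K] W →ₗ[K] K) →ₗ[K] V) (h : finrank K M = finrank K V) :
    Disjoint M (LinearMap.ker g) ↔ M.map g = ⊤ := by
  let _ : AddCommGroup M := Submodule.addCommGroup (R := K) (M := W →ₗ[K] W →ₗ[K] K) M
  have hinj : Disjoint M (LinearMap.ker g) ↔ Function.Injective (g.domRestrict M) := by
    simp only [Submodule.disjoint_def, LinearMap.mem_ker, injective_iff_map_eq_zero,
      Subtype.forall, LinearMap.domRestrict_apply, Submodule.mk_eq_zero]
  rw [hinj, ← LinearMap.range_domRestrict, LinearMap.range_eq_top]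
  exact LinearMap.injective_iff_surjective_of_finrank_eq_finrank h

theorem map_applyₗ_eq_top_of_ker_eq_bot [FiniteDimensional K W]
    {M : Submodule K (W →ₗ[K] W →ₗ[K] K)} (hnd : ∀ f ∈ M, f ≠ 0 → LinearMap.ker f = ⊥)
    (hdim : finrank K M = finrank K W) {w : W} (hw : w ≠ 0) :
    M.map (LinearMap.applyₗ w) = ⊤ := by
  rw [← disjoint_ker_iff_map_eq_top_of_finrank_eq _ (hdim.trans Subspace.dual_finrank_eq.symm),
    Submodule.disjoint_def]
  intro f hf hfw
  by_contra hf0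
  have hw' : w ∈ LinearMap.ker f := hfw
  exact hw (by rwa [hnd f hf hf0, Submodule.mem_bot] at hw')

theorem exists_mem_apply_self_ne_zero_of_ker_eq_bot [FiniteDimensional K W]
    {M : Submodule K (W →ₗ[K] W →ₗ[K] K)} (hnd : ∀ f ∈ M, f ≠ 0 → LinearMap.ker f = ⊥)
    (hdim : finrank K M = finrank K W) {w : W} (hw : w ≠ 0) :
    ∃ f ∈ M, f w w ≠ 0 := by
  obtain ⟨ℓ, hℓ⟩ : ∃ ℓ : Dual K W, ℓ w ≠ 0 := by
    by_contra! h
    exact hw ((forall_dual_apply_eq_zero_iff K w).mp h)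
  have hℓM : ℓ ∈ M.map (LinearMap.applyₗ w) := by
    rw [map_applyₗ_eq_top_of_ker_eq_bot hnd hdim hw]
    trivial
  obtain ⟨f, hf, rfl⟩ := hℓM
  exact ⟨f, hf, hℓ⟩

noncomputable def bilinDiagonal {ι : Type*} (b : Basis ι K W) :
    (W →ₗ[K] W →ₗ[K] K) →ₗ[K] (ι → K) where
  toFun f i := f (b i) (b i)
  map_add' _ _ := rfl
  map_smul' _ _ := rfl

theorem map_bilinDiagonal_eq_top [CharP K 2] (hsqrt : ∀ x : K, ∃ y : K, y ^ 2 = x)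
    {M : Submodule K (W →ₗ[K] W →ₗ[K] K)} (hsymm : ∀ f ∈ M, ∀ x y : W, f x y = f y x)
    (hZ : ∀ w : W, w ≠ 0 → ∃ f ∈ M, f w w ≠ 0) {ι : Type*} [Fintype ι] (b : Basis ι K W) :
    M.map (bilinDiagonal b) = ⊤ := by
  classical
  by_contra hne
  obtain ⟨φ, hφ0, hφ⟩ := Submodule.exists_le_ker_of_lt_top _ (lt_top_iff_ne_top.mpr hne)
  choose c hc using fun i => hsqrt (φ fun j => if i = j then 1 else 0)
  have hφ_apply (v : ι → K) : φ v = ∑ i, c i ^ 2 * v i := by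
    simp [φ.pi_apply_eq_sum_univ v, hc, mul_comm]
  have hw : ∑ i, c i • b i = 0 := by
    by_contra hw
    obtain ⟨f, hf, hfw⟩ := hZ _ hw
    apply hfw
    rw [apply_sum_smul_self_of_charTwo (hsymm f hf)]
    simpa [hφ_apply, bilinDiagonal] using hφ (Submodule.mem_map_of_mem hf)
  have hc0 := Fintype.linearIndependent_iff.mp b.linearIndependent c hw
  exact hφ0 (LinearMap.ext fun v => by simp [hφ_apply, hc0])

end Field

/-- over a perfect field of characteristic 2, a subspace `M` of symmetric
bilinear forms on `W` with `dim M = dim W` all of whose nonzero elements are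
nondegenerate contains no nonzero alternating form. -/
theorem stmt14 (K : Type*) [Field K] [CharP K 2] (hperf : ∀ x : K, ∃ y : K, y ^ 2 = x)
    (W : Type*) [AddCommGroup W] [Module K W] [FiniteDimensional K W]
    (M : Submodule K (W →ₗ[K] W →ₗ[K] K))
    (hsymm : ∀ f ∈ M, ∀ x y : W, f x y = f y x)
    (hnd : ∀ f ∈ M, f ≠ 0 → LinearMap.ker f = ⊥)
    (hdim : Module.finrank K ↥M = Module.finrank K W) :
    ∀ f ∈ M, (∀ x : W, f x x = 0) → f = 0 := by
  intro f hf halt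
  let b := Module.finBasis K W
  have htop := map_bilinDiagonal_eq_top hperf hsymm
    (fun w hw => exists_mem_apply_self_ne_zero_of_ker_eq_bot hnd hdim hw) b
  have hdisj : Disjoint M (LinearMap.ker (bilinDiagonal b)) :=
    (disjoint_ker_iff_map_eq_top_of_finrank_eq _ (by simp [hdim])).mpr htop
  exact Submodule.disjoint_def.mp hdisj f hf (funext fun i => halt (b i))
end

section
/- Let K be a field with |K| ≥ d − 1 and L an extension field of K of degree d > 2 such that there are no proper intermediate fields strictly between K and L. Let A be any K-subspace of L of dimension d − 1. Then there is no two-dimensional K-subspace U of L such that every nonzero element of U is the inverse of a nonzero element of A (i.e. U \ {0} ⊆ A⁻¹). -/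
open Polynomial

/-- if `L/K` has degree `d > 2`, there are no proper intermediate fields,
`|K| ≥ d − 1`, and `A` is a `(d−1)`-dimensional `K`-subspace of `L`, then no
two-dimensional `K`-subspace `U` of `L` satisfies `U \ {0} ⊆ A⁻¹`. -/
theorem stmt19 (K L : Type*) [Field K] [Field L] [Algebra K L]
    (d : ℕ) (hd : Module.finrank K L = d) (hd2 : 2 < d)
    (hK : (d - 1 : ℕ) ≤ Cardinal.mk K)
    (hmin : ∀ F : IntermediateField K L, F = ⊥ ∨ F = ⊤)
    (A : Submodule K L) (hA : Module.finrank K ↥A = d - 1) :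
    ¬ ∃ U : Submodule K L, Module.finrank K ↥U = 2 ∧
        ∀ x ∈ U, x ≠ 0 → ∃ a ∈ A, a ≠ 0 ∧ x = a⁻¹ := by
  classical
  rintro ⟨U, hU2, hUA⟩
  have hfin : FiniteDimensional K L :=
    Module.finite_of_finrank_pos (by rw [hd]; omega)
  -- pick u ∈ U, u ≠ 0
  obtain ⟨u, huU, hu0⟩ : ∃ u ∈ U, u ≠ 0 := by
    by_contra h
    push_neg at h
    have hUbot : U = ⊥ := by
      apply le_bot_iff.mp
      intro x hx
      simp [h x hx]
    rw [hUbot, finrank_bot] at hU2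
    omega
  -- pick v ∈ U independent from u
  obtain ⟨v, hvU, hv⟩ : ∃ v ∈ U, v ∉ Submodule.span K {u} := by
    by_contra h
    push_neg at h
    have hle : U ≤ Submodule.span K {u} := h
    have := Submodule.finrank_mono hle
    rw [hU2, finrank_span_singleton hu0] at this
    omega
  -- distinct scalars
  obtain ⟨k⟩ : Nonempty (Fin (d - 1) ↪ K) := by
    obtain ⟨s, hs⟩ := Cardinal.le_mk_iff_exists_set.mp hK
    rw [Cardinal.mk_eq_nat_iff] at hs
    obtain ⟨e⟩ := hs
    exact ⟨(e.symm.toEmbedding).trans (Function.Embedding.subtype _)⟩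
  -- inverses of nonzero elements of U lie in A
  have hmem : ∀ x ∈ U, x ≠ 0 → x⁻¹ ∈ A := by
    intro x hx hx0
    obtain ⟨a, haA, ha0, hxa⟩ := hUA x hx hx0
    rw [hxa, inv_inv]
    exact haA
  have hUadd : ∀ i : Fin (d - 1), k i • u + v ∈ U := fun i =>
    U.add_mem (U.smul_mem _ huU) hvU
  have hne : ∀ i : Fin (d - 1), k i • u + v ≠ 0 := by
    intro i h
    apply hv
    have : v = (-(k i)) • u := by
      rw [neg_smul]
      linear_combination h
    rw [this]
    exact Submodule.smul_mem _ _ (Submodule.mem_span_singleton_self u)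
  -- the d vectors in A
  set w : Option (Fin (d - 1)) → ↥A := fun o =>
    match o with
    | none => ⟨u⁻¹, hmem u huU hu0⟩
    | some i => ⟨(k i • u + v)⁻¹, hmem _ (hUadd i) (hne i)⟩ with hw
  have hdep : ¬ LinearIndependent K w := by
    intro h
    have := h.fintype_card_le_finrank
    rw [hA, Fintype.card_option, Fintype.card_fin] at this
    omega
  obtain ⟨c, hc, m, hm⟩ := Fintype.not_linearIndependent_iff.mp hdep
  have hrel : c none • u⁻¹ + ∑ i : Fin (d - 1), c (some i) • (k i • u + v)⁻¹ = 0 := by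
    have h2 := congrArg (A.subtype) hc
    rw [map_sum, map_zero, Fintype.sum_option] at h2
    simpa [hw] using h2
  -- the element α ∉ K
  set α : L := u⁻¹ * v with hα
  have hαK : ∀ b : K, α ≠ algebraMap K L b := by
    intro b hb
    apply hv
    have : v = b • u := by
      rw [Algebra.smul_def, ← hb, hα, mul_comm (u⁻¹ * v) u, ← mul_assoc,
        mul_inv_cancel₀ hu0, one_mul]
    rw [this]
    exact Submodule.smul_mem _ _ (Submodule.mem_span_singleton_self u)
  have hfac : ∀ i : Fin (d - 1), k i • u + v = u * (algebraMap K L (k i) + α) := by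
    intro i
    rw [mul_add, hα, ← mul_assoc, mul_inv_cancel₀ hu0, one_mul,
      Algebra.smul_def, mul_comm u (algebraMap K L (k i))]
  have hαk : ∀ i : Fin (d - 1), algebraMap K L (k i) + α ≠ 0 := by
    intro i h
    exact hne i (by rw [hfac i, h, mul_zero])
  -- the key relation, after multiplying by u
  have R : algebraMap K L (c none)
      + ∑ i : Fin (d - 1), algebraMap K L (c (some i)) * (algebraMap K L (k i) + α)⁻¹ = 0 := by
    have h2 := congrArg (fun x : L => u * x) hrel
    simp only [mul_zero, mul_add, Finset.mul_sum] at h2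
    rw [show u * (c none • u⁻¹) = algebraMap K L (c none) by
        rw [Algebra.smul_def, show u * (algebraMap K L (c none) * u⁻¹)
          = (u * u⁻¹) * algebraMap K L (c none) by ring, mul_inv_cancel₀ hu0, one_mul]] at h2
    rw [Finset.sum_congr rfl (fun i _ => show u * (c (some i) • (k i • u + v)⁻¹)
        = algebraMap K L (c (some i)) * (algebraMap K L (k i) + α)⁻¹ by
      rw [hfac i, Algebra.smul_def, mul_inv,
        show u * (algebraMap K L (c (some i)) * (u⁻¹ * (algebraMap K L (k i) + α)⁻¹))
          = (u * u⁻¹) * (algebraMap K L (c (some i)) * (algebraMap K L (k i) + α)⁻¹) by ring,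
        mul_inv_cancel₀ hu0, one_mul])] at h2
    exact h2
  -- the polynomial
  set q : K[X] := ∏ j : Fin (d - 1), (X + C (k j)) with hq
  set qe : Fin (d - 1) → K[X] := fun i => ∏ j ∈ Finset.univ.erase i, (X + C (k j)) with hqe
  set p : K[X] := C (c none) * q + ∑ i : Fin (d - 1), C (c (some i)) * qe i with hp
  -- aeval α p = 0
  have haevq : ∀ i : Fin (d - 1),
      aeval α (qe i) = (algebraMap K L (k i) + α)⁻¹ * aeval α q := by
    intro i
    have h1 : aeval α q = (α + algebraMap K L (k i)) * aeval α (qe i) := by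
      rw [hq, hqe, map_prod, map_prod]
      simp only [map_add, aeval_X, aeval_C]
      exact (Finset.mul_prod_erase _ _ (Finset.mem_univ i)).symm
    rw [h1, show (α + algebraMap K L (k i)) = (algebraMap K L (k i) + α) from add_comm _ _,
      ← mul_assoc, inv_mul_cancel₀ (hαk i), one_mul]
  have haev : aeval α p = 0 := by
    rw [hp, map_add, map_mul, aeval_C, map_sum]
    rw [Finset.sum_congr rfl (fun i _ => by
      rw [map_mul, aeval_C, haevq i, ← mul_assoc])]
    rw [← Finset.sum_mul, ← add_mul, R, zero_mul]
  -- q is monic of degree d - 1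
  have hqmonic : q.Monic := monic_prod_of_monic _ _ (fun i _ => monic_X_add_C _)
  have hqdeg : q.natDegree = d - 1 := by
    rw [hq, natDegree_prod _ _ (fun i _ => (monic_X_add_C (k i)).ne_zero)]
    simp [natDegree_X_add_C]
  have hqedeg : ∀ i : Fin (d - 1), (qe i).natDegree ≤ d - 2 := by
    intro i
    refine le_trans (natDegree_prod_le _ _) ?_
    rw [Finset.sum_congr rfl (fun j _ => natDegree_X_add_C (k j))]
    simp only [Finset.sum_const, smul_eq_mul, mul_one]
    rw [Finset.card_erase_of_mem (Finset.mem_univ i), Finset.card_univ, Fintype.card_fin]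
    omega
  -- degree bound for p
  have hpdeg : p.natDegree ≤ d - 1 := by
    rw [hp]
    refine le_trans (natDegree_add_le _ _) (max_le ?_ ?_)
    · exact le_trans (natDegree_C_mul_le _ _) hqdeg.le
    · refine natDegree_sum_le_of_forall_le _ _ (fun i _ => ?_)
      exact le_trans (natDegree_C_mul_le _ _) (le_trans (hqedeg i) (by omega))
  -- p ≠ 0
  have hp0 : p ≠ 0 := by
    rcases eq_or_ne (c none) 0 with h0 | h0
    · -- some coefficient c (some j) is nonzero; evaluate at -(k j)
      obtain ⟨j, hj⟩ : ∃ j : Fin (d - 1), c (some j) ≠ 0 := by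
        cases m with
        | none => exact absurd h0 hm
        | some j => exact ⟨j, hm⟩
      intro hpz
      have hev := congrArg (Polynomial.eval (-(k j))) hpz
      rw [hp, eval_zero, eval_add, eval_mul, eval_C, h0, zero_mul, zero_add,
        eval_finset_sum] at hev
      rw [Finset.sum_eq_single j (fun i _ hij => by
          rw [eval_mul, eval_C, hqe]
          simp only [eval_prod, eval_add, eval_X, eval_C]
          rw [Finset.prod_eq_zero (Finset.mem_erase.mpr ⟨Ne.symm hij, Finset.mem_univ j⟩)
            (by ring), mul_zero]) (fun h => absurd (Finset.mem_univ j) h)] at hev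
      rw [eval_mul, eval_C, hqe] at hev
      simp only [eval_prod, eval_add, eval_X, eval_C] at hev
      have : ∏ x ∈ Finset.univ.erase j, (-(k j) + k x) ≠ 0 := by
        refine Finset.prod_ne_zero_iff.mpr (fun i hi => ?_)
        intro h
        have : k i = k j := by linear_combination h
        exact (Finset.mem_erase.mp hi).1 (k.injective this)
      exact this (by
        rcases mul_eq_zero.mp hev with h | h
        · exact absurd h hj
        · exact h)
    · -- leading coefficient of p at degree d - 1 is c none
      intro hpz
      have hco := congrArg (fun r : K[X] => r.coeff (d - 1)) hpz
      simp only [hp, coeff_zero, coeff_add, coeff_C_mul, finset_sum_coeff] at hco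
      rw [show q.coeff (d - 1) = 1 by rw [← hqdeg]; exact hqmonic.coeff_natDegree] at hco
      rw [Finset.sum_eq_zero (fun i _ => by
        rw [coeff_eq_zero_of_natDegree_lt (lt_of_le_of_lt (hqedeg i) (by omega : d - 2 < d - 1)),
          mul_zero])] at hco
      simp at hco
      exact h0 hco
  -- minimal polynomial of α has degree d
  have hαint : IsIntegral K α := IsIntegral.of_finite K α
  have hadj : IntermediateField.adjoin K {α} = ⊤ := by
    rcases hmin (IntermediateField.adjoin K {α}) with h | h
    · exfalso
      have : α ∈ IntermediateField.adjoin K {α} := IntermediateField.mem_adjoin_simple_self K α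
      rw [h, IntermediateField.mem_bot] at this
      obtain ⟨b, hb⟩ := this
      exact hαK b hb.symm
    · exact h
  have hmindeg : (minpoly K α).natDegree = d := by
    rw [← IntermediateField.adjoin.finrank hαint, hadj]
    rw [← hd]
    exact IntermediateField.topEquiv.toLinearEquiv.finrank_eq
  have hdle := Polynomial.natDegree_le_natDegree (minpoly.degree_le_of_ne_zero K α hp0 haev)
  rw [hmindeg] at hdle
  omega
end
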